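/- arXiv:1407.3462 — 3 statements merged into one kernel-verified Lean document; each statement's English description precedes it below -/
import Mathlib

section
/- Let G be a multigraph on n vertices given by a stream of m edge updates (e_i, Δ_i), where E_i(u,v) denotes the multiplicity of edge (u,v) after the first i-1 updates. Then the total number of (weighted) triangles in the final graph, i.e. Σ_{u<v<z} E_{m+1}(u,v)·E_{m+1}(v,z)·E_{m+1}(z,u), equals Σ_{i≤m} Δ_i · Σ_{z∈[n]} E_i(u_i,z)·E_i(v_i,z), where the i-th update is to edge (u_i,v_i) and the graph has no self-loops. -/
/-! An update adding `δ` to the edge `{x, y}` changes only the triangles through that edge, and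
a triangle contains it at most once, so the change in the count is linear in `δ`: the triangle
with third vertex `z` gains `δ * E(x, z) * E(y, z)`. Summing these increments along the stream
telescopes to the final count. -/

open Finset

theorem Finset.pair_eq_pair_iff {α : Type*} [DecidableEq α] {x y z w : α} :
    ({x, y} : Finset α) = {z, w} ↔ x = z ∧ y = w ∨ x = w ∧ y = z := by
  rw [← coe_inj, coe_pair, coe_pair, Set.pair_eq_pair_iff]

theorem Finset.pair_eq_pair_iff_of_lt {α : Type*} [LinearOrder α] {x y a b : α} (hxy : x < y)
    (hab : a < b) : ({x, y} : Finset α) = {a, b} ↔ a = x ∧ b = y := by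
  rw [pair_eq_pair_iff]
  constructor
  · rintro (⟨rfl, rfl⟩ | ⟨rfl, rfl⟩)
    · exact ⟨rfl, rfl⟩
    · exact absurd (hxy.trans hab) (lt_irrefl _)
  · rintro ⟨rfl, rfl⟩
    exact Or.inl ⟨rfl, rfl⟩

section TriangleSum

variable {α R : Type*} [LinearOrder α] [CommRing R]

def addEdge (F : α → α → R) (x y : α) (δ : R) (a b : α) : R :=
  F a b + if ({x, y} : Finset α) = {a, b} then δ else 0

lemma addEdge_comm (F : α → α → R) (x y : α) (δ : R) : addEdge F x y δ = addEdge F y x δ := by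
  funext a b
  simp only [addEdge, Finset.pair_comm x y]

lemma addEdge_mul_addEdge_mul_addEdge {F : α → α → R} {x y : α} (δ : R) (hxy : x < y)
    {a b c : α} (hab : a < b) (hbc : b < c) :
    addEdge F x y δ a b * addEdge F x y δ b c * addEdge F x y δ c a =
      F a b * F b c * F c a + δ * ((if a = x ∧ b = y then F b c * F c a else 0) +
        (if b = x ∧ c = y then F a b * F c a else 0) +
        (if a = x ∧ c = y then F a b * F b c else 0)) := by
  simp only [addEdge, Finset.pair_comm c a, pair_eq_pair_iff_of_lt hxy hab,
    pair_eq_pair_iff_of_lt hxy hbc, pair_eq_pair_iff_of_lt hxy (hab.trans hbc)]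
  split_ifs <;> grind

variable [Fintype α]

def triangleSum (F : α → α → R) : R :=
  ∑ a, ∑ b ∈ univ.filter (fun b => a < b), ∑ c ∈ univ.filter (fun c => b < c),
    F a b * F b c * F c a

lemma triangleSum_zero : triangleSum (0 : α → α → R) = 0 := by
  simp [triangleSum]

lemma sum_eq_sum_lt_add_sum_between_add_sum_gt {k : α → R} {x y : α} (hxy : x < y)
    (hx : k x = 0) (hy : k y = 0) :
    ∑ z, k z = ∑ z ∈ univ.filter (· < x), k z + ∑ z ∈ univ.filter (fun z => x < z ∧ z < y), k z +
      ∑ z ∈ univ.filter (y < ·), k z := by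
  simp only [sum_filter, ← sum_add_distrib]
  refine sum_congr rfl fun z _ => ?_
  rcases lt_trichotomy z x with hzx | rfl | hxz
  · simp [hzx, hzx.not_gt, (hzx.trans hxy).not_gt]
  · simp [hx]
  rcases lt_trichotomy z y with hzy | rfl | hyz
  · simp [hxz, hzy, hxz.not_gt, hzy.not_gt]
  · simp [hy]
  · simp [hyz, hyz.not_gt, hxz.not_gt]

theorem triangleSum_addEdge {F : α → α → R} {x y : α} (δ : R) (hsymm : ∀ a b, F a b = F b a)
    (hdiag : ∀ a, F a a = 0) (hxy : x ≠ y) :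
    triangleSum (addEdge F x y δ) = triangleSum F + δ * ∑ z, F x z * F y z := by
  wlog hlt : x < y generalizing x y
  · rw [addEdge_comm, this hxy.symm (lt_of_le_of_ne (not_lt.mp hlt) hxy.symm)]
    simp only [mul_comm (F y _)]
  calc triangleSum (addEdge F x y δ)
      = ∑ a, ∑ b ∈ univ.filter (fun b => a < b), ∑ c ∈ univ.filter (fun c => b < c),
          (F a b * F b c * F c a + δ * ((if a = x ∧ b = y then F b c * F c a else 0) +
            (if b = x ∧ c = y then F a b * F c a else 0) +
            (if a = x ∧ c = y then F a b * F b c else 0))) := by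
        refine sum_congr rfl fun a _ => sum_congr rfl fun b hb => sum_congr rfl fun c hc => ?_
        exact addEdge_mul_addEdge_mul_addEdge δ hlt (mem_filter.1 hb).2 (mem_filter.1 hc).2
    _ = triangleSum F + δ * (∑ z ∈ univ.filter (y < ·), F x z * F y z +
          ∑ z ∈ univ.filter (· < x), F x z * F y z +
          ∑ z ∈ univ.filter (fun z => x < z ∧ z < y), F x z * F y z) := by
        simp only [sum_add_distrib, ← mul_sum]
        simp [ite_and, sum_filter, hlt, triangleSum, hsymm _ x, hsymm _ y, mul_comm (F y _)]
    _ = triangleSum F + δ * ∑ z, F x z * F y z := by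
        rw [sum_eq_sum_lt_add_sum_between_add_sum_gt hlt (k := fun z => F x z * F y z)
          (by simp [hdiag]) (by simp [hdiag])]
        ring

end TriangleSum

section Stream

variable {α R : Type*} [LinearOrder α] [CommRing R] {m : ℕ} (u v : Fin m → α) (Δ : Fin m → R)

/-- Updates are indexed from `0`, so `streamMultiplicity u v Δ i` sums the first `i - 1` of them. -/
def streamMultiplicity (i : ℕ) (a b : α) : R :=
  ∑ j ∈ univ.filter (fun j : Fin m => (j : ℕ) + 1 < i ∧ ({u j, v j} : Finset α) = {a, b}), Δ j

lemma streamMultiplicity_comm (i : ℕ) (a b : α) :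
    streamMultiplicity u v Δ i a b = streamMultiplicity u v Δ i b a := by
  simp only [streamMultiplicity, Finset.pair_comm a b]

lemma streamMultiplicity_self {u v : Fin m → α} (huv : ∀ j, u j ≠ v j) (i : ℕ) (a : α) :
    streamMultiplicity u v Δ i a a = 0 := by
  refine sum_eq_zero fun j hj => absurd ?_ (huv j)
  obtain ⟨-, hj⟩ := (mem_filter.1 hj).2
  rcases pair_eq_pair_iff.1 hj with ⟨hu, hv⟩ | ⟨hu, hv⟩ <;> exact hu.trans hv.symm

lemma streamMultiplicity_one : streamMultiplicity u v Δ 1 = 0 := by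
  funext a b
  exact sum_eq_zero fun j hj => absurd (mem_filter.1 hj).2.1 (by omega)

lemma streamMultiplicity_succ (i : Fin m) :
    streamMultiplicity u v Δ (i + 1 + 1) =
      addEdge (streamMultiplicity u v Δ (i + 1)) (u i) (v i) (Δ i) := by
  funext a b
  rw [addEdge,
    ← Fintype.sum_ite_eq' i (fun j => if ({u j, v j} : Finset α) = {a, b} then Δ j else 0)]
  simp only [streamMultiplicity, sum_filter, ite_and, ← sum_add_distrib]
  refine sum_congr rfl fun j _ => ?_
  rcases eq_or_ne j i with rfl | hji
  · simp
  · have : (j : ℕ) ≠ i := Fin.val_ne_of_ne hji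
    simp only [hji, if_false, add_zero]
    congr 1
    exact propext (by omega)

end Stream

/-- For a dynamic graph stream `⟨(e_i, Δ_i)⟩` on vertex set `Fin n`
(with `e_i = (u i, v i)`, no self-loops), letting `E i a b` denote the
multiplicity of edge `{a,b}` after the first `i - 1` updates (so `E (m+1)` is the
final multiplicity function), the weighted triangle count of the final graph
equals `Σ_{i ≤ m} Δ_i · Σ_z E_i(u_i, z) · E_i(v_i, z)`. -/
theorem triangle_count_incremental (n m : ℕ) (u v : Fin m → Fin n)
    (huv : ∀ i, u i ≠ v i) (Δ : Fin m → ℤ)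
    (E : ℕ → Fin n → Fin n → ℤ)
    (hE : ∀ (i : ℕ) (a b : Fin n),
      E i a b = ∑ j ∈ univ.filter (fun j : Fin m =>
        (j : ℕ) + 1 < i ∧ ({u j, v j} : Finset (Fin n)) = {a, b}), Δ j) :
    (∑ a : Fin n, ∑ b ∈ univ.filter (fun b => a < b),
        ∑ c ∈ univ.filter (fun c => b < c),
          E (m + 1) a b * E (m + 1) b c * E (m + 1) c a) =
      ∑ i : Fin m, Δ i * ∑ z : Fin n,
        E ((i : ℕ) + 1) (u i) z * E ((i : ℕ) + 1) (v i) z := by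
  obtain rfl : E = streamMultiplicity u v Δ :=
    funext fun i => funext fun a => funext fun b => hE i a b
  have step (i : Fin m) :
      triangleSum (streamMultiplicity u v Δ (i + 1 + 1)) -
          triangleSum (streamMultiplicity u v Δ (i + 1)) =
        Δ i * ∑ z, streamMultiplicity u v Δ (i + 1) (u i) z *
          streamMultiplicity u v Δ (i + 1) (v i) z := by
    rw [streamMultiplicity_succ, triangleSum_addEdge _ (streamMultiplicity_comm u v Δ _)
      (streamMultiplicity_self Δ huv _) (huv i), add_sub_cancel_left]
  change triangleSum (streamMultiplicity u v Δ (m + 1)) = _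
  rw [eq_sum_range_sub (fun k => triangleSum (streamMultiplicity u v Δ (k + 1))) m,
    ← Fin.sum_univ_eq_sum_range (fun k => triangleSum (streamMultiplicity u v Δ (k + 1 + 1)) -
      triangleSum (streamMultiplicity u v Δ (k + 1)))]
  simp only [step, zero_add, streamMultiplicity_one, triangleSum_zero]
end

section
/- (Tutte–Berge formula) Let G = (V,E) be a finite simple graph. The maximum size of a matching in G equals (1/2) min over U ⊆ V of (|U| - odd(G-U) + |V|). -/
/-!
Add `k` new vertices to `G`, adjacent to each other and to every vertex of `G`. Deleting
`U` together with all new vertices leaves `G - U`, so Tutte's condition for the enlarged graph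
at `U ∪ {new vertices}` reads `odd(G - U) ≤ |U| + k`; every other set keeps a new vertex, which
makes what is left connected. A perfect matching of the enlarged graph restricts to a matching of
`G` missing at most `k` vertices, and a matching of `G` missing exactly `k` vertices extends to one.
Taking `k` the number of vertices missed by a matching, the easy half of Tutte's theorem gives
the upper bound; taking `k = max_U (odd(G - U) - |U|)`, the hard half produces a matching
attaining it.
-/

open Finset

/-- A finset of edges of `G` forming a matching: every edge is an edge of `G`,
and distinct edges share no vertex. -/
def IsGraphMatching {V : Type*} (G : SimpleGraph V) (M : Finset (Sym2 V)) : Prop :=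
  (∀ e ∈ M, e ∈ G.edgeSet) ∧
    ∀ e ∈ M, ∀ f ∈ M, e ≠ f → ∀ x : V, x ∈ e → x ∉ f

/-- The number of connected components of odd cardinality of a graph. -/
noncomputable def oddComponentCount {W : Type*} (H : SimpleGraph W) : ℕ :=
  Nat.card {c : H.ConnectedComponent // Odd (Nat.card c.supp)}

lemma IsGraphMatching.card_biUnion_toFinset {V : Type*} [DecidableEq V] {G : SimpleGraph V}
    {M : Finset (Sym2 V)} (hM : IsGraphMatching G M) :
    (M.biUnion Sym2.toFinset).card = 2 * M.card := by
  rw [card_biUnion, sum_const_nat (m := 2), mul_comm]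
  · exact fun e he => Sym2.card_toFinset_of_not_isDiag e (G.not_isDiag_of_mem_edgeSet (hM.1 e he))
  · intro e he f hf hef
    rw [Function.onFun, Finset.disjoint_left]
    intro x hxe hxf
    exact hM.2 e he f hf hef x (by simpa using hxe) (by simpa using hxf)

lemma IsGraphMatching.exists_isMatching_edgeSet_eq {V : Type*} {G : SimpleGraph V}
    {M : Finset (Sym2 V)} (hM : IsGraphMatching G M) :
    ∃ M' : G.Subgraph, M'.IsMatching ∧ M'.edgeSet = ↑M := by
  refine ⟨{ verts := {v | ∃ e ∈ M, v ∈ e}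
            Adj v w := s(v, w) ∈ M
            adj_sub h := hM.1 _ h
            edge_vert h := ⟨_, h, Sym2.mem_mk_left _ _⟩
            symm := ⟨fun v w h => by rwa [Sym2.eq_swap]⟩ }, ?_, ?_⟩
  · rintro v ⟨e, he, hv⟩
    obtain ⟨w, rfl⟩ := Sym2.mem_iff_exists.mp hv
    refine ⟨w, he, fun w' hw' => ?_⟩
    by_contra hne
    exact hM.2 _ hw' _ he (fun h => hne (Sym2.congr_right.mp h)) v
      (Sym2.mem_mk_left _ _) (Sym2.mem_mk_left _ _)
  · ext e
    induction e using Sym2.ind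
    simp

namespace SimpleGraph

namespace Subgraph.IsMatching

variable {V : Type*} {G : SimpleGraph V} {M : G.Subgraph}

lemma isGraphMatching_toFinset (hM : M.IsMatching) [Fintype M.edgeSet] :
    IsGraphMatching G M.edgeSet.toFinset := by
  refine ⟨fun e he => M.edgeSet_subset (Set.mem_toFinset.mp he), ?_⟩
  intro e he f hf hef x hxe hxf
  rw [Set.mem_toFinset] at he hf
  obtain ⟨y, rfl⟩ := Sym2.mem_iff_exists.mp hxe
  obtain ⟨z, rfl⟩ := Sym2.mem_iff_exists.mp hxf
  exact hef (by rw [hM.eq_of_adj_left (M.mem_edgeSet.mp he) (M.mem_edgeSet.mp hf)])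

lemma ncard_verts [Finite V] (hM : M.IsMatching) : M.verts.ncard = 2 * M.edgeSet.ncard := by
  classical
  have := Fintype.ofFinite V
  have : M.verts = ↑(M.edgeSet.toFinset.biUnion Sym2.toFinset) := by
    rw [hM.verts_eq_biUnion_edgeSet]
    ext
    simp
  rw [this, Set.ncard_coe_finset, hM.isGraphMatching_toFinset.card_biUnion_toFinset,
    Set.ncard_eq_toFinset_card']

end Subgraph.IsMatching

variable {V W : Type*}

lemma oddComponentCount_eq_ncard_oddComponents (H : SimpleGraph W) :
    oddComponentCount H = H.oddComponents.ncard :=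
  rfl

lemma Iso.oddComponentCount_eq {H : SimpleGraph V} {H' : SimpleGraph W} (φ : H ≃g H') :
    oddComponentCount H = oddComponentCount H' :=
  Nat.card_congr <| φ.connectedComponentEquiv.subtypeEquiv fun c => by
    rw [Nat.card_congr (ConnectedComponent.isoEquivSupp φ c)]

lemma odd_oddComponentCount_induce_compl_iff [Fintype V] (G : SimpleGraph V) (U : Finset V) :
    Odd (oddComponentCount (G.induce (↑U)ᶜ)) ↔ Odd (Fintype.card V - U.card) := by
  rw [oddComponentCount_eq_ncard_oddComponents, odd_ncard_oddComponents, Nat.card_coe_set_eq,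
    Set.ncard_compl, Set.ncard_coe_finset, Nat.card_eq_fintype_card]

def joinUniversal (G : SimpleGraph V) (k : ℕ) : SimpleGraph (V ⊕ Fin k) :=
  (G ⊕g ⊤) ⊔ completeBipartiteGraph V (Fin k)

variable {G : SimpleGraph V} {k : ℕ}

@[simp] lemma joinUniversal_adj_inl_inl {x y : V} :
    (G.joinUniversal k).Adj (.inl x) (.inl y) ↔ G.Adj x y := by
  simp [joinUniversal]

@[simp] lemma joinUniversal_adj_inr {a : V ⊕ Fin k} {j : Fin k} :
    (G.joinUniversal k).Adj a (.inr j) ↔ a ≠ .inr j := by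
  cases a <;> simp [joinUniversal]

def joinUniversalInl (G : SimpleGraph V) (k : ℕ) : G →g G.joinUniversal k :=
  ⟨Sum.inl, joinUniversal_adj_inl_inl.mpr⟩

noncomputable def induceComplIsoJoinUniversalDeleteVerts (U : Set V) :
    G.induce Uᶜ ≃g
      ((⊤ : (G.joinUniversal k).Subgraph).deleteVerts
        (Sum.inl '' U ∪ Set.range Sum.inr)).coe where
  toEquiv := .ofBijective (fun x => ⟨.inl x, by simpa using Set.notMem_of_mem_compl x.2⟩) <| by
    refine ⟨fun x y h => Subtype.ext (Sum.inl_injective (congrArg Subtype.val h)), ?_⟩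
    rintro ⟨a | j, ha⟩
    · exact ⟨⟨a, by simpa using ha⟩, rfl⟩
    · simp at ha
  map_rel_iff' := by
    rintro ⟨x, hx⟩ ⟨y, hy⟩
    simp only [Set.mem_compl_iff] at hx hy
    simp [Equiv.ofBijective, hx, hy]

lemma joinUniversal_isTutteViolator_iff (U : Finset V) :
    (G.joinUniversal k).IsTutteViolator (Sum.inl '' ↑U ∪ Set.range Sum.inr) ↔
      U.card + k < oddComponentCount (G.induce (↑U)ᶜ) := by
  have hcard : (Sum.inl '' (U : Set V) ∪ Set.range (Sum.inr : Fin k → V ⊕ Fin k)).ncard =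
      U.card + k := by
    rw [Set.ncard_union_eq (by simp [Set.disjoint_left]),
      Set.ncard_image_of_injective _ Sum.inl_injective, Set.ncard_coe_finset,
      ← Nat.card_coe_set_eq, Nat.card_range_of_injective Sum.inr_injective, Nat.card_fin]
  rw [IsTutteViolator, hcard, ← oddComponentCount_eq_ncard_oddComponents,
    ← (induceComplIsoJoinUniversalDeleteVerts (k := k) (U : Set V)).oddComponentCount_eq]

lemma joinUniversal_deleteVerts_preconnected {u : Set (V ⊕ Fin k)} {j : Fin k}
    (hj : Sum.inr j ∉ u) :
    ((⊤ : (G.joinUniversal k).Subgraph).deleteVerts u).coe.Preconnected := by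
  set H := (⊤ : (G.joinUniversal k).Subgraph).deleteVerts u
  let c : H.verts := ⟨.inr j, by simpa [H] using hj⟩
  have hc : ∀ a, H.coe.Reachable a c := by
    intro a
    by_cases h : a = c
    · rw [h]
    · refine Adj.reachable ?_
      simpa [H, Subtype.ext_iff, a.2.2, hj, c] using h
  exact fun a b => (hc a).trans (hc b).symm

lemma joinUniversal_not_isTutteViolator [Fintype V] (hpar : Even (Fintype.card V + k))
    (h : ∀ U : Finset V, oddComponentCount (G.induce (↑U)ᶜ) ≤ U.card + k)
    (u : Set (V ⊕ Fin k)) : ¬(G.joinUniversal k).IsTutteViolator u := by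
  classical
  by_cases hu : Set.range Sum.inr ⊆ u
  · have : u = Sum.inl '' ↑(univ.filter (fun x => Sum.inl x ∈ u)) ∪ Set.range Sum.inr := by
      ext (x | j) <;> simp [@hu (.inr _)]
    rw [this, joinUniversal_isTutteViolator_iff, not_lt]
    exact h _
  · -- A new vertex survives, so what is left is connected, with an even number of vertices
    -- when `u = ∅`.
    obtain ⟨_, ⟨j, rfl⟩, hj⟩ := Set.not_subset.mp hu
    have hle :
        ((⊤ : (G.joinUniversal k).Subgraph).deleteVerts u).coe.oddComponents.ncard ≤ 1 := by
      have := (joinUniversal_deleteVerts_preconnected (G := G) hj).subsingleton_connectedComponent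
      exact Set.ncard_le_one_of_subsingleton _
    rw [IsTutteViolator, not_lt]
    rcases u.eq_empty_or_nonempty with rfl | hne
    · have hcard : Nat.card ((⊤ : (G.joinUniversal k).Subgraph).deleteVerts ∅).verts =
          Fintype.card V + k := by
        simp
      have hodd :=
        odd_ncard_oddComponents ((⊤ : (G.joinUniversal k).Subgraph).deleteVerts ∅).coe
      rw [hcard] at hodd
      rw [Set.ncard_empty, Nat.le_zero]
      by_contra hpos
      exact Nat.not_odd_iff_even.mpr hpar (hodd.mp (by rw [Nat.odd_iff]; omega))
    · exact hle.trans ((Set.ncard_pos).mpr hne)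

lemma Subgraph.IsPerfectMatching.exists_isMatching_of_joinUniversal [Fintype V]
    {M' : (G.joinUniversal k).Subgraph} (hM' : M'.IsPerfectMatching) :
    ∃ M : G.Subgraph, M.IsMatching ∧ Fintype.card V ≤ M.verts.ncard + k := by
  let M : G.Subgraph :=
    { verts := {x | ∃ y, M'.Adj (.inl x) (.inl y)}
      Adj x y := M'.Adj (.inl x) (.inl y)
      adj_sub h := by simpa using M'.adj_sub h
      edge_vert h := ⟨_, h⟩
      symm := ⟨fun _ _ h => h.symm⟩ }
  have hM : M.IsMatching := by
    rintro x ⟨y, hy⟩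
    exact ⟨y, hy, fun z hz => Sum.inl_injective (hM'.1.eq_of_adj_left hz hy)⟩
  have hpartner : ∀ x : ↥M.vertsᶜ, ∃ j, M'.Adj (.inl x) (.inr j) := by
    rintro ⟨x, hx⟩
    obtain ⟨a | j, ha, -⟩ := hM'.1 (hM'.2 (.inl x))
    · exact absurd ⟨a, ha⟩ hx
    · exact ⟨j, ha⟩
  choose f hf using hpartner
  have hf_inj : f.Injective := fun x y hxy =>
    Subtype.ext (Sum.inl_injective (hM'.1.eq_of_adj_right (hf x) (hxy ▸ hf y)))
  refine ⟨M, hM, ?_⟩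
  have := Nat.card_le_card_of_injective f hf_inj
  rw [Nat.card_coe_set_eq, Nat.card_fin] at this
  have := Set.ncard_add_ncard_compl M.verts
  rw [Nat.card_eq_fintype_card] at this
  omega

lemma Subgraph.IsMatching.exists_isPerfectMatching_joinUniversal [Fintype V] {M : G.Subgraph}
    (hM : M.IsMatching) :
    ∃ M' : (G.joinUniversal (Fintype.card V - M.verts.ncard)).Subgraph, M'.IsPerfectMatching := by
  set k := Fintype.card V - M.verts.ncard
  let s : Set (V ⊕ Fin k) := Sum.inl '' M.vertsᶜ
  let t : Set (V ⊕ Fin k) := Set.range Sum.inr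
  have hst : Disjoint s t := by simp [s, t, Set.disjoint_left]
  have hcard : Nat.card s = Nat.card t := by
    rw [Nat.card_coe_set_eq, Set.ncard_image_of_injective _ Sum.inl_injective, Set.ncard_compl,
      Nat.card_range_of_injective Sum.inr_injective, Nat.card_fin, Nat.card_eq_fintype_card]
  obtain ⟨e⟩ := Finite.card_eq.mp hcard
  obtain ⟨M₂, hM₂verts, hM₂⟩ := IsMatching.exists_of_disjoint_sets_of_equiv
      (G := G.joinUniversal k) hst e fun v => by
    obtain ⟨j, hj⟩ := (e v).2
    rw [← hj, joinUniversal_adj_inr]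
    obtain ⟨_, ⟨x, -, rfl⟩⟩ := v
    simp
  have hM₁ := hM.map (joinUniversalInl G k) Sum.inl_injective
  refine ⟨M.map (joinUniversalInl G k) ⊔ M₂, hM₁.sup hM₂ ?_, ?_⟩
  · rw [hM₁.support_eq_verts, hM₂.support_eq_verts, hM₂verts]
    simp only [Subgraph.map_verts, joinUniversalInl, s, t, Set.disjoint_left]
    rintro _ ⟨x, hx, rfl⟩ (⟨y, hy, hyx⟩ | ⟨j, hj⟩)
    · exact hy (Sum.inl_injective hyx ▸ hx)
    · cases hj
  · rw [Subgraph.isSpanning_iff, Subgraph.verts_sup, hM₂verts]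
    ext (x | j)
    · by_cases hx : x ∈ M.verts <;> simp [s, hx, joinUniversalInl]
    · simp [t]

theorem exists_isMatching_of_forall_oddComponentCount_le [Fintype V]
    (hpar : Even (Fintype.card V + k))
    (h : ∀ U : Finset V, oddComponentCount (G.induce (↑U)ᶜ) ≤ U.card + k) :
    ∃ M : G.Subgraph, M.IsMatching ∧ Fintype.card V ≤ M.verts.ncard + k := by
  obtain ⟨M', hM'⟩ := tutte.mpr (joinUniversal_not_isTutteViolator hpar h)
  exact hM'.exists_isMatching_of_joinUniversal

theorem Subgraph.IsMatching.oddComponentCount_add_ncard_verts_le [Fintype V] {M : G.Subgraph}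
    (hM : M.IsMatching) (U : Finset V) :
    oddComponentCount (G.induce (↑U)ᶜ) + M.verts.ncard ≤ U.card + Fintype.card V := by
  obtain ⟨M', hM'⟩ := hM.exists_isPerfectMatching_joinUniversal
  have := not_isTutteViolator_of_isPerfectMatching hM' (Sum.inl '' ↑U ∪ Set.range Sum.inr)
  rw [joinUniversal_isTutteViolator_iff, not_lt] at this
  have := Set.ncard_le_card M.verts
  rw [Nat.card_eq_fintype_card] at this
  omega

theorem exists_isMatching_card_add_card_le_oddComponentCount_add [Fintype V]
    (G : SimpleGraph V) :
    ∃ (U : Finset V) (M : G.Subgraph), M.IsMatching ∧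
      U.card + Fintype.card V ≤ oddComponentCount (G.induce (↑U)ᶜ) + M.verts.ncard := by
  -- `U` maximises the deficiency `odd(G - U) - |U|`, shifted by `|V|` to stay in `ℕ`.
  obtain ⟨U, -, hU⟩ := exists_max_image univ
    (fun U : Finset V => oddComponentCount (G.induce (↑U)ᶜ) + (Fintype.card V - U.card))
    univ_nonempty
  have hUV := card_le_univ U
  have hU₀ := hU ∅ (mem_univ _)
  simp only [card_empty, Nat.sub_zero] at hU₀
  have hpar := odd_oddComponentCount_induce_compl_iff G U
  rw [Nat.odd_iff, Nat.odd_iff] at hpar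
  obtain ⟨M, hM, hMV⟩ := exists_isMatching_of_forall_oddComponentCount_le (G := G)
    (k := oddComponentCount (G.induce (↑U)ᶜ) - U.card) (by rw [Nat.even_iff]; omega)
    (fun U' => by have := hU U' (mem_univ _); have := card_le_univ U'; omega)
  exact ⟨U, M, hM, by omega⟩

end SimpleGraph

lemma IsGraphMatching.oddComponentCount_add_two_mul_card_le {V : Type*} [Fintype V]
    {G : SimpleGraph V} {M : Finset (Sym2 V)} (hM : IsGraphMatching G M) (U : Finset V) :
    oddComponentCount (G.induce (↑U)ᶜ) + 2 * M.card ≤ U.card + Fintype.card V := by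
  obtain ⟨N, hN, hNM⟩ := hM.exists_isMatching_edgeSet_eq
  simpa [hN.ncard_verts, hNM] using hN.oddComponentCount_add_ncard_verts_le U

theorem tutte_berge_formula_general {V : Type*} [Fintype V]
    (G : SimpleGraph V) :
    ∃ M : Finset (Sym2 V), IsGraphMatching G M ∧
      (∀ M' : Finset (Sym2 V), IsGraphMatching G M' → M'.card ≤ M.card) ∧
      (M.card : ℚ) =
        ((univ : Finset (Finset V)).inf' ⟨∅, mem_univ ∅⟩
          (fun U : Finset V => (U.card : ℚ)
            - (oddComponentCount (G.induce ((↑U : Set V)ᶜ)) : ℚ)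
            + (Fintype.card V : ℚ))) / 2 := by
  classical
  obtain ⟨U₀, M₀, hM₀, hU₀⟩ :=
    G.exists_isMatching_card_add_card_le_oddComponentCount_add
  rw [hM₀.ncard_verts, Set.ncard_eq_toFinset_card'] at hU₀
  have hM₀' := hM₀.isGraphMatching_toFinset
  refine ⟨M₀.edgeSet.toFinset, hM₀',
    fun M hM => by have := hM.oddComponentCount_add_two_mul_card_le U₀; omega, ?_⟩
  rw [eq_div_iff two_ne_zero]
  refine le_antisymm (le_inf' _ _ fun U _ => ?_) ((inf'_le _ (mem_univ U₀)).trans ?_)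
  · have := (Nat.cast_le (α := ℚ)).mpr (hM₀'.oddComponentCount_add_two_mul_card_le U)
    push_cast at this
    linarith
  · have := (Nat.cast_le (α := ℚ)).mpr hU₀
    push_cast at this
    linarith

/-- Tutte–Berge formula: the maximum size of a matching of a
finite simple graph `G` equals
`(1/2) · min_{U ⊆ V} (|U| - odd(G - U) + |V|)`. -/
theorem tutte_berge_formula {V : Type*} [Fintype V] [DecidableEq V]
    (G : SimpleGraph V) :
    ∃ M : Finset (Sym2 V), IsGraphMatching G M ∧
      (∀ M' : Finset (Sym2 V), IsGraphMatching G M' → M'.card ≤ M.card) ∧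
      (M.card : ℚ) =
        ((univ : Finset (Finset V)).inf' ⟨∅, mem_univ ∅⟩
          (fun U : Finset V => (U.card : ℚ)
            - (oddComponentCount (G.induce ((↑U : Set V)ᶜ)) : ℚ)
            + (Fintype.card V : ℚ))) / 2 :=
  tutte_berge_formula_general G
end

section
/- Let G'₂ be a simple graph whose vertex set is S₁ ∪ S₂ ∪ {v*} with S₁, S₂ disjoint of size n/2 each, whose edges are: (a) some set of edges between S₁ and S₂, and (b) all edges between v* and S₂. Fix u ∈ S₁, let I(u) be the set of edges of G'₂ incident to u, and for a set L of edges joining u to vertices of S₂, let G'₃ be obtained from G'₂ by taking the symmetric difference of its edge set with L ∪ {(u, v*)}. Then G'₃ is bipartite if and only if L = I(u). -/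
/-!
`S₁` and `S₂` are the two summands of `Fin k ⊕ Fin k` and `v*` is `none`.

In `G'₃` the vertex `v*` is joined to `u` (by the added edge) and still to all of `S₂`, so an
edge between `u` and `S₂` surviving in `G'₃` closes a triangle; such an edge exists exactly when
`L ≠ I(u)`. When `L = I(u)` the XOR isolates `u` and joins it to `v*` alone, so the bipartition
of `G'₂` into `S₂` and the rest stays proper once `u` is moved to the side of `S₂`.
-/

theorem Set.eq_of_subset_range_of_forall_mem_iff {α ι : Type*} {f : ι → α} {A B : Set α}
    (hA : A ⊆ Set.range f) (hB : B ⊆ Set.range f) (h : ∀ i, f i ∈ A ↔ f i ∈ B) : A = B := by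
  ext x
  constructor
  · intro hx
    obtain ⟨i, rfl⟩ := hA hx
    exact (h i).1 hx
  · intro hx
    obtain ⟨i, rfl⟩ := hB hx
    exact (h i).2 hx

namespace SimpleGraph

variable {V : Type*} {G : SimpleGraph V}

theorem not_colorable_two_of_triangle {a b c : V}
    (hab : G.Adj a b) (hac : G.Adj a c) (hbc : G.Adj b c) : ¬ G.Colorable 2 := fun hG => by
  classical
  exact hG.cliqueFree (by norm_num) {a, b, c} (is3Clique_triple_iff.2 ⟨hab, hac, hbc⟩)

theorem fromEdgeSet_symmDiff_adj {s : Set (Sym2 V)} {x y : V} :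
    (fromEdgeSet (symmDiff G.edgeSet s)).Adj x y ↔ Xor (G.Adj x y) (s(x, y) ∈ s) ∧ x ≠ y :=
  Iff.rfl

/-- Recolor `u` away from the color of `w`: its only remaining neighbour. -/
theorem Colorable.fromEdgeSet_symmDiff_incidenceSet_union {n : ℕ} (hG : G.Colorable n)
    (hn : 2 ≤ n) (u w : V) :
    (fromEdgeSet (symmDiff G.edgeSet (G.incidenceSet u ∪ {s(u, w)}))).Colorable n := by
  classical
  obtain ⟨C⟩ := hG
  have : Nontrivial (Fin n) := Fin.nontrivial_iff_two_le.2 hn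
  obtain ⟨a, ha⟩ := exists_ne (C w)
  refine ⟨Coloring.mk (Function.update C u a) fun {x y} hxy => ?_⟩
  obtain ⟨hxor | hxor, hne⟩ := fromEdgeSet_symmDiff_adj.1 hxy
  · obtain ⟨hadj, hnot⟩ := hxor
    have hx : x ≠ u := fun h => hnot (.inl ⟨hadj, h ▸ Sym2.mem_mk_left x y⟩)
    have hy : y ≠ u := fun h => hnot (.inl ⟨hadj, h ▸ Sym2.mem_mk_right x y⟩)
    simpa [Function.update_of_ne hx, Function.update_of_ne hy] using C.valid hadj
  · obtain ⟨hI | hw, hnadj⟩ := hxor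
    · exact absurd hI.1 hnadj
    · rcases Sym2.eq_iff.1 hw with ⟨rfl, rfl⟩ | ⟨rfl, rfl⟩
      · simpa [Function.update_of_ne hne.symm] using ha
      · simpa [Function.update_of_ne hne] using ha.symm

end SimpleGraph

open SimpleGraph

namespace XorBipartite

variable {k : ℕ} {G : SimpleGraph (Option (Fin k ⊕ Fin k))}

theorem colorable_two_of_not_adj_within_parts
    (hstar₁ : ∀ a : Fin k, ¬ G.Adj none (some (Sum.inl a)))
    (h₁₁ : ∀ a a' : Fin k, ¬ G.Adj (some (Sum.inl a)) (some (Sum.inl a')))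
    (h₂₂ : ∀ b b' : Fin k, ¬ G.Adj (some (Sum.inr b)) (some (Sum.inr b'))) :
    G.Colorable 2 := by
  let side : Option (Fin k ⊕ Fin k) → Bool
    | some (.inr _) => true
    | _ => false
  refine (Coloring.mk side fun {x y} hxy => ?_).colorable
  rcases x with _ | a | b <;> rcases y with _ | a' | b'
  all_goals first | exact absurd hxy.symm (hstar₁ _) | simp_all [side]

theorem incidenceSet_inl_subset_range
    (hstar₁ : ∀ a : Fin k, ¬ G.Adj none (some (Sum.inl a)))
    (h₁₁ : ∀ a a' : Fin k, ¬ G.Adj (some (Sum.inl a)) (some (Sum.inl a'))) (u : Fin k) :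
    G.incidenceSet (some (.inl u)) ⊆ Set.range fun b => s(some (.inl u), some (.inr b)) := by
  rintro e ⟨he, hu⟩
  induction e using Sym2.ind with | _ x y => ?_
  rcases Sym2.mem_iff.1 hu with rfl | rfl
  · rcases y with _ | a | b
    · exact absurd (G.adj_symm he) (hstar₁ u)
    · exact absurd he (h₁₁ u a)
    · exact ⟨b, rfl⟩
  · rcases x with _ | a | b
    · exact absurd he (hstar₁ u)
    · exact absurd he (h₁₁ a u)
    · exact ⟨b, Sym2.eq_swap⟩

variable {u : Fin k} {L : Set (Sym2 (Option (Fin k ⊕ Fin k)))}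

local notation "G₃" => fromEdgeSet (symmDiff G.edgeSet (L ∪ {s(some (Sum.inl u), none)}))

theorem adj_inl_none (hstar₁ : ¬ G.Adj none (some (Sum.inl u))) :
    (G₃).Adj (some (.inl u)) none :=
  fromEdgeSet_symmDiff_adj.2 ⟨.inr ⟨.inr rfl, fun h => hstar₁ h.symm⟩, by simp⟩

theorem adj_inr_none (hL : ∀ e ∈ L, ∃ b : Fin k, e = s(some (Sum.inl u), some (Sum.inr b)))
    {b : Fin k} (hb : G.Adj none (some (.inr b))) : (G₃).Adj (some (.inr b)) none := by
  refine fromEdgeSet_symmDiff_adj.2 ⟨.inl ⟨hb.symm, ?_⟩, by simp⟩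
  rintro (h | h)
  · obtain ⟨b', hb'⟩ := hL _ h
    simp at hb'
  · simp at h

theorem adj_inl_inr_iff {b : Fin k} :
    (G₃).Adj (some (.inl u)) (some (.inr b)) ↔
      Xor (G.Adj (some (.inl u)) (some (.inr b))) (s(some (.inl u), some (.inr b)) ∈ L) := by
  have hLu : s(some (.inl u), some (.inr b)) ∈ L ∪ {s(some (Sum.inl u), none)} ↔
      s(some (.inl u), some (.inr b)) ∈ L := by simp
  rw [fromEdgeSet_symmDiff_adj, hLu, and_iff_left (by simp)]

end XorBipartite

open XorBipartite

/-- Let `G₂` be a simple graph on `S₁ ∪ S₂ ∪ {v*}` (encoded as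
`Option (Fin k ⊕ Fin k)`, with `S₁` the left summand, `S₂` the right summand,
`v* = none`, and `k = n/2`), whose edges are some set of edges between `S₁` and
`S₂` together with all edges between `v*` and `S₂`. Fix `u ∈ S₁`, let `I(u)` be
the set of edges of `G₂` incident to `u`, and let `L` be a set of edges joining
`u` to vertices of `S₂`. If `G₃` is obtained from `G₂` by XOR-ing its edge set
with `L ∪ {(u, v*)}`, then `G₃` is bipartite iff `L = I(u)`. -/
theorem xor_bipartite_iff (k : ℕ)
    (G₂ : SimpleGraph (Option (Fin k ⊕ Fin k)))
    (hstar₂ : ∀ b : Fin k, G₂.Adj none (some (Sum.inr b)))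
    (hstar₁ : ∀ a : Fin k, ¬ G₂.Adj none (some (Sum.inl a)))
    (h₁₁ : ∀ a a' : Fin k, ¬ G₂.Adj (some (Sum.inl a)) (some (Sum.inl a')))
    (h₂₂ : ∀ b b' : Fin k, ¬ G₂.Adj (some (Sum.inr b)) (some (Sum.inr b')))
    (u : Fin k)
    (L : Set (Sym2 (Option (Fin k ⊕ Fin k))))
    (hL : ∀ e ∈ L, ∃ b : Fin k,
      e = s(some (Sum.inl u), some (Sum.inr b))) :
    (SimpleGraph.fromEdgeSet
        (symmDiff G₂.edgeSet (L ∪ {s(some (Sum.inl u), none)}))).Colorable 2 ↔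
      L = {e ∈ G₂.edgeSet | (some (Sum.inl u) : Option (Fin k ⊕ Fin k)) ∈ e} := by
  change _ ↔ L = G₂.incidenceSet (some (.inl u))
  constructor
  · intro hcol
    refine Set.eq_of_subset_range_of_forall_mem_iff (fun e he => (hL e he).imp fun _ => Eq.symm)
      (incidenceSet_inl_subset_range hstar₁ h₁₁ u) fun b => ?_
    rw [mk'_mem_incidenceSet_left_iff, iff_comm, ← not_xor]
    intro hxor
    exact not_colorable_two_of_triangle (adj_inl_inr_iff.2 hxor) (adj_inl_none (hstar₁ u))
      (adj_inr_none hL (hstar₂ b)) hcol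
  · rintro rfl
    have hG₂ := colorable_two_of_not_adj_within_parts hstar₁ h₁₁ h₂₂
    exact hG₂.fromEdgeSet_symmDiff_incidenceSet_union le_rfl _ none
end
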